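/- Let κ > 1, c₅ > 0, c₆ > 0, τ > 0, and let y : (0,∞) → [0,∞) be continuously differentiable and satisfy y'(t) + c₅·y(t)^κ ≤ c₆ for all t > 0. Then y(t) ≤ c₇·(τ/2)^{−1/(κ−1)} + c₇ for all t > τ, where c₇ := max{((κ−1)c₅)^{−1/(κ−1)}, (c₆/c₅)^{1/κ}}. -/

import Mathlib

lemma add_rpow_le_rpow_add' {a b p : ℝ} (ha : 0 ≤ a) (hb : 0 ≤ b) (hp : 1 ≤ p) :
    a ^ p + b ^ p ≤ (a + b) ^ p := by
  have h := NNReal.add_rpow_le_rpow_add (a.toNNReal) (b.toNNReal) hp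
  have h2 : ((a.toNNReal ^ p + b.toNNReal ^ p : NNReal) : ℝ) ≤
      (((a.toNNReal + b.toNNReal) ^ p : NNReal) : ℝ) := by exact_mod_cast h
  rw [NNReal.coe_add, NNReal.coe_rpow, NNReal.coe_rpow, NNReal.coe_rpow, NNReal.coe_add,
    Real.coe_toNNReal a ha, Real.coe_toNNReal b hb] at h2
  exact h2

/-- The constant c₇ = max{((κ−1)c₅)^{−1/(κ−1)}, (c₆/c₅)^{1/κ}}. -/
noncomputable def cSeven (κ c₅ c₆ : ℝ) : ℝ :=
  max (((κ - 1) * c₅) ^ (-(1 / (κ - 1)))) ((c₆ / c₅) ^ (1 / κ))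

set_option maxHeartbeats 1000000 in
/-- if y ∈ C¹((0,∞)) is nonnegative and satisfies y' + c₅ y^κ ≤ c₆ on (0,∞),
then y(t) ≤ c₇ (τ/2)^{−1/(κ−1)} + c₇ for all t > τ. -/
theorem superlinear_ODI_eventual_bound (κ c₅ c₆ τ : ℝ) (hκ : 1 < κ) (hc₅ : 0 < c₅)
    (hc₆ : 0 < c₆) (hτ : 0 < τ) (y : ℝ → ℝ)
    (hy0 : ∀ t > (0:ℝ), 0 ≤ y t)
    (hydiff : ∀ t > (0:ℝ), DifferentiableAt ℝ y t)
    (hyC1 : ContinuousOn (deriv y) (Set.Ioi (0:ℝ)))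
    (hODI : ∀ t > (0:ℝ), deriv y t + c₅ * (y t) ^ κ ≤ c₆) :
    ∀ t > τ, y t ≤ cSeven κ c₅ c₆ * (τ / 2) ^ (-(1 / (κ - 1))) + cSeven κ c₅ c₆ := by
  intro T hT
  set α : ℝ := 1 / (κ - 1) with hαdef
  have hκ1 : (0:ℝ) < κ - 1 := by linarith
  have hκ0 : (0:ℝ) < κ := by linarith
  have hα : 0 < α := by positivity
  set c₇ : ℝ := cSeven κ c₅ c₆ with hc₇def
  have hc₇pos : 0 < c₇ := by
    have : (0:ℝ) < ((κ - 1) * c₅) ^ (-(1 / (κ - 1))) :=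
      Real.rpow_pos_of_pos (by positivity) _
    exact lt_of_lt_of_le this (le_max_left _ _)
  -- key constant inequalities
  have hc₇a : α * c₇ ≤ c₅ * c₇ ^ κ := by
    have h1 : ((κ - 1) * c₅) ^ (-(1 / (κ - 1))) ≤ c₇ := le_max_left _ _
    have h2 : (((κ - 1) * c₅) ^ (-(1 / (κ - 1)))) ^ (κ - 1) ≤ c₇ ^ (κ - 1) :=
      Real.rpow_le_rpow (Real.rpow_pos_of_pos (by positivity) _).le h1 hκ1.le
    have h3 : (((κ - 1) * c₅) ^ (-(1 / (κ - 1)))) ^ (κ - 1)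
        = ((κ - 1) * c₅)⁻¹ := by
      rw [← Real.rpow_mul (by positivity)]
      rw [show (-(1 / (κ - 1))) * (κ - 1) = -1 by field_simp]
      rw [Real.rpow_neg_one]
    rw [h3] at h2
    have he : c₅ * ((κ - 1) * c₅)⁻¹ = α := by
      rw [hαdef]; field_simp
    have h4 : α ≤ c₅ * c₇ ^ (κ - 1) := by
      rw [← he]
      exact mul_le_mul_of_nonneg_left h2 hc₅.le
    have h5 : c₇ ^ κ = c₇ ^ (κ - 1) * c₇ := by
      rw [← Real.rpow_add_one (ne_of_gt hc₇pos)]; norm_num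
    calc α * c₇ ≤ (c₅ * c₇ ^ (κ - 1)) * c₇ := mul_le_mul_of_nonneg_right h4 hc₇pos.le
      _ = c₅ * c₇ ^ κ := by rw [h5]; ring
  have hc₇b : c₆ ≤ c₅ * c₇ ^ κ := by
    have h1 : (c₆ / c₅) ^ (1 / κ) ≤ c₇ := le_max_right _ _
    have h2 : ((c₆ / c₅) ^ (1 / κ)) ^ κ ≤ c₇ ^ κ :=
      Real.rpow_le_rpow (Real.rpow_pos_of_pos (by positivity) _).le h1 hκ0.le
    have h3 : ((c₆ / c₅) ^ (1 / κ)) ^ κ = c₆ / c₅ := by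
      rw [← Real.rpow_mul (by positivity), one_div, inv_mul_cancel₀ (ne_of_gt hκ0),
        Real.rpow_one]
    rw [h3, div_le_iff₀ hc₅] at h2
    linarith [h2]
  set t₀ : ℝ := T - τ / 2 with ht₀def
  have ht₀pos : 0 < t₀ := by rw [ht₀def]; linarith
  have ht₀T : t₀ < T := by rw [ht₀def]; linarith
  -- reduce to ε-version
  have key : ∀ ε > (0:ℝ), y T ≤ c₇ * (τ / 2) ^ (-α) + c₇ + ε := by
    intro ε hε
    set B : ℝ → ℝ := fun s => c₇ * (s - t₀) ^ (-α) + (c₇ + ε) with hBdef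
    have hBderiv : ∀ s, t₀ < s →
        HasDerivAt B (c₇ * (-α * (s - t₀) ^ (-α - 1))) s := by
      intro s hs
      have h1 : HasDerivAt (fun x : ℝ => x - t₀) 1 s := (hasDerivAt_id s).sub_const t₀
      have h2 : HasDerivAt (fun x : ℝ => x ^ (-α)) (-α * (s - t₀) ^ (-α - 1)) (s - t₀) :=
        Real.hasDerivAt_rpow_const (Or.inl (sub_ne_zero.mpr (ne_of_gt hs)))
      have h3 := (h2.comp s h1).const_mul c₇
      have h4 := h3.add_const (c₇ + ε)
      have h5 : c₇ * (-α * (s - t₀) ^ (-α - 1)) = c₇ * (-α * (s - t₀) ^ (-α - 1) * 1) := by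
        ring
      rw [h5]
      exact h4
    have hBpos : ∀ s, t₀ < s → 0 < B s := by
      intro s hs
      have h1 : (0:ℝ) < (s - t₀) ^ (-α) := Real.rpow_pos_of_pos (by linarith) _
      have h2 : B s = c₇ * (s - t₀) ^ (-α) + (c₇ + ε) := rfl
      rw [h2]; nlinarith
    -- strict supersolution property
    have hsuper : ∀ s, t₀ < s → ∀ z, B s ≤ z →
        c₆ < c₇ * (-α * (s - t₀) ^ (-α - 1)) + c₅ * z ^ κ := by
      intro s hs z hz
      set u : ℝ := s - t₀ with hudef
      have hu : 0 < u := by rw [hudef]; linarith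
      have hupos : 0 < u ^ (-α) := Real.rpow_pos_of_pos hu _
      have hBval : B s = c₇ * u ^ (-α) + (c₇ + ε) := rfl
      have hBspos : 0 < B s := hBpos s hs
      have hz1 : (B s) ^ κ ≤ z ^ κ := Real.rpow_le_rpow hBspos.le hz hκ0.le
      have hz2 : (c₇ * u ^ (-α)) ^ κ + (c₇ + ε) ^ κ ≤ (B s) ^ κ := by
        rw [hBval]
        exact add_rpow_le_rpow_add' (by positivity) (by positivity) hκ.le
      have hz3 : (c₇ * u ^ (-α)) ^ κ = c₇ ^ κ * u ^ (-α - 1) := by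
        rw [Real.mul_rpow hc₇pos.le hupos.le, ← Real.rpow_mul hu.le]
        congr 1
        rw [hαdef]; field_simp
        congr 1
        ring
      have hz4 : α * c₇ * u ^ (-α - 1) ≤ c₅ * (c₇ ^ κ * u ^ (-α - 1)) := by
        have hup : 0 < u ^ (-α - 1) := Real.rpow_pos_of_pos hu _
        nlinarith
      have hz5 : c₅ * c₇ ^ κ < c₅ * (c₇ + ε) ^ κ := by
        have : c₇ ^ κ < (c₇ + ε) ^ κ :=
          Real.rpow_lt_rpow hc₇pos.le (by linarith) hκ0
        nlinarith
      nlinarith [mul_le_mul_of_nonneg_left hz2 hc₅.le, mul_le_mul_of_nonneg_left hz1 hc₅.le]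
    -- continuity of y on [t₀, T]
    have hycont : ContinuousOn y (Set.Icc t₀ T) := fun s hs =>
      ((hydiff s (lt_of_lt_of_le ht₀pos hs.1)).continuousAt).continuousWithinAt
    obtain ⟨xm, hxm, hxmax⟩ := isCompact_Icc.exists_isMaxOn
      (Set.nonempty_Icc.mpr ht₀T.le) hycont
    set K : ℝ := y xm with hKdef
    have hK : ∀ s ∈ Set.Icc t₀ T, y s ≤ K := fun s hs => hxmax hs
    have hK0 : 0 ≤ K := le_trans (hy0 xm (lt_of_lt_of_le ht₀pos hxm.1)) le_rfl
    -- choose the starting point l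
    set u₀ : ℝ := min ((T - t₀) / 2) ((c₇ / (K + 1)) ^ α⁻¹) with hu₀def
    have hu₀pos : 0 < u₀ := by
      apply lt_min (by linarith)
      exact Real.rpow_pos_of_pos (by positivity) _
    have hu₀T : u₀ < T - t₀ := lt_of_le_of_lt (min_le_left _ _) (by linarith)
    have hu₀K : K + 1 ≤ c₇ * u₀ ^ (-α) := by
      have h1 : u₀ ≤ (c₇ / (K + 1)) ^ α⁻¹ := min_le_right _ _
      have h2 : u₀ ^ α ≤ ((c₇ / (K + 1)) ^ α⁻¹) ^ α :=
        Real.rpow_le_rpow hu₀pos.le h1 hα.le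
      have h3 : ((c₇ / (K + 1)) ^ α⁻¹) ^ α = c₇ / (K + 1) := by
        rw [← Real.rpow_mul (by positivity), inv_mul_cancel₀ (ne_of_gt hα), Real.rpow_one]
      rw [h3] at h2
      have hu₀α : 0 < u₀ ^ α := Real.rpow_pos_of_pos hu₀pos _
      rw [Real.rpow_neg hu₀pos.le, ← div_eq_mul_inv, le_div_iff₀ hu₀α]
      calc (K + 1) * u₀ ^ α ≤ (K + 1) * (c₇ / (K + 1)) :=
            mul_le_mul_of_nonneg_left h2 (by positivity)
        _ = c₇ := by field_simp
    set l : ℝ := t₀ + u₀ with hldef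
    have hlt₀ : t₀ < l := by rw [hldef]; linarith
    have hlT : l < T := by rw [hldef]; linarith
    have hyl : y l < B l := by
      have h1 : y l ≤ K := hK l ⟨by linarith, by linarith⟩
      have h2 : B l = c₇ * u₀ ^ (-α) + (c₇ + ε) := by
        simp only [hBdef]
        rw [show l - t₀ = u₀ by rw [hldef]; ring]
      rw [h2]
      nlinarith
    -- the comparison argument
    suffices hcomp : y T ≤ B T by
      have hTτ : T - t₀ = τ / 2 := by rw [ht₀def]; ring
      simpa [hBdef, hTτ, add_assoc] using hcomp
    by_contra hcon
    push_neg at hcon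
    set S : Set ℝ := {s ∈ Set.Icc l T | B s ≤ y s} with hSdef
    have hBcont : ContinuousOn B (Set.Icc l T) := fun s hs =>
      ((hBderiv s (lt_of_lt_of_le hlt₀ hs.1)).differentiableAt.continuousAt).continuousWithinAt
    have hycont' : ContinuousOn y (Set.Icc l T) := fun s hs =>
      ((hydiff s (lt_of_lt_of_le (lt_trans ht₀pos hlt₀) hs.1)).continuousAt).continuousWithinAt
    have hScl : IsClosed S := by
      have : S = Set.Icc l T ∩ (fun s => y s - B s) ⁻¹' Set.Ici 0 := by
        ext s
        simp only [hSdef, Set.mem_setOf_eq, Set.mem_inter_iff, Set.mem_preimage,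
          Set.mem_Ici, sub_nonneg]
      rw [this]
      exact ContinuousOn.preimage_isClosed_of_isClosed (hycont'.sub hBcont)
        isClosed_Icc isClosed_Ici
    have hSne : S.Nonempty := ⟨T, ⟨⟨hlT.le, le_rfl⟩, hcon.le⟩⟩
    have hSbdd : BddBelow S := ⟨l, fun s hs => hs.1.1⟩
    set m : ℝ := sInf S with hmdef
    have hmS : m ∈ S := hScl.csInf_mem hSne hSbdd
    have hml : l < m := by
      rcases lt_or_eq_of_le hmS.1.1 with h | h
      · exact h
      · exfalso; rw [h] at hyl; exact absurd hmS.2 (not_le.mpr hyl)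
    have hmT : m ≤ T := hmS.1.2
    have hmt₀ : t₀ < m := lt_trans hlt₀ hml
    have hm0 : (0:ℝ) < m := lt_trans ht₀pos hmt₀
    -- derivative of y - B at m
    have hyB : HasDerivAt (fun s => y s - B s)
        (deriv y m - c₇ * (-α * (m - t₀) ^ (-α - 1))) m :=
      ((hydiff m hm0).hasDerivAt).sub (hBderiv m hmt₀)
    -- left slope nonneg
    have hslope : 0 ≤ deriv y m - c₇ * (-α * (m - t₀) ^ (-α - 1)) := by
      have hW : HasDerivWithinAt (fun s => y s - B s)
          (deriv y m - c₇ * (-α * (m - t₀) ^ (-α - 1))) (Set.Iio m) m :=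
        hyB.hasDerivWithinAt
      rw [hasDerivWithinAt_iff_tendsto_slope' (Set.notMem_Iio_self)] at hW
      refine ge_of_tendsto hW ?_
      filter_upwards [self_mem_nhdsWithin,
        eventually_nhdsWithin_of_eventually_nhds (eventually_gt_nhds hml)] with s hs1 hs2
      have hsm : s < m := hs1
      have hsnS : s ∉ S := fun hmem => absurd (csInf_le hSbdd hmem) (not_le.mpr hsm)
      have hsIcc : s ∈ Set.Icc l T := ⟨hs2.le, le_trans hsm.le hmT⟩
      have hsy : y s < B s := by
        by_contra hcc
        exact hsnS ⟨hsIcc, not_lt.mp hcc⟩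
      have hnum : y s - B s - (y m - B m) < 0 := by
        have : 0 ≤ y m - B m := sub_nonneg.mpr hmS.2
        linarith
      have : slope (fun s => y s - B s) m s
          = (y s - B s - (y m - B m)) / (s - m) := by
        rw [slope_def_field]
        try ring_nf
      rw [this]
      exact le_of_lt (div_pos_of_neg_of_neg hnum (by linarith))
    -- the ODI gives the opposite strict inequality
    have hODIm := hODI m hm0
    have hlt := hsuper m hmt₀ (y m) hmS.2
    linarith
  -- let ε → 0
  by_contra hcon
  push_neg at hcon
  have hε : 0 < (y T - (c₇ * (τ / 2) ^ (-α) + c₇)) / 2 := by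
    simp only [hαdef] at *
    linarith
  have := key _ hε
  simp only [hαdef] at *
  linarith
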